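/- arXiv:2111.10885 — 2 statements merged into one kernel-verified Lean document; each statement's English description precedes it below -/
import Mathlib

section
/- Composing hospital-proposing Gale–Shapley with strictly individually fair hospital preferences does not guarantee fairness: there exist finite sets D, H with |D| = |H| = 4, a partition of D into clusters, strict doctor preference orders on H, probabilistic hospital preferences (one distribution over strict linear orders on D per hospital, sampled independently across hospitals) each of which is strictly individually fair with respect to the partition, and a function f mapping each preference profile in the support of the product distribution to the hospital-optimal stable matching of that profile, such that the probabilistic allocation obtained as the pushforward of the product distribution under f is not PIIF with respect to the proto-metric induced by the partition. -/
/-!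
Doctors 0 and 1 form a cluster, doctors 2 and 3 are singletons. Every hospital ranks the
clusters in a fixed order and breaks the tie between doctors 0 and 1 by an independent fair
coin, which is strictly individually fair. On every resulting profile, the hospital-optimal
stable matching sends doctor 0 to hospital 0 or 3, the two hospitals doctor 1 likes best,
whereas doctor 1 gets one of them only when hospital 0 ranks doctor 1 above doctor 0, that is
with probability 1/2. So for doctor 1's own preferences, the prospect of doctor 1 does not
stochastically dominate that of doctor 0.
-/

open Finset

/-- A probabilistic allocation: a finitely supported probability distribution over
matchings (bijections between doctors `D` and hospitals `H`). -/
def IsAlloc {D H : Type*} [Fintype D] [Fintype H] [DecidableEq D] [DecidableEq H]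
    (π : (D ≃ H) → ℝ) : Prop :=
  (∀ m, 0 ≤ π m) ∧ (∑ m : D ≃ H, π m) = 1

/-- The prospect of doctor `i` under the allocation `π`: the probability that `i`
is matched to hospital `h`. -/
def prospect {D H : Type*} [Fintype D] [Fintype H] [DecidableEq D] [DecidableEq H]
    (π : (D ≃ H) → ℝ) (i : D) (h : H) : ℝ :=
  ∑ m : D ≃ H, if m i = h then π m else 0

/-- `p` is a probability distribution on `H`. -/
def IsDist {H : Type*} [Fintype H] (p : H → ℝ) : Prop :=
  (∀ h, 0 ≤ p h) ∧ (∑ h : H, p h) = 1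

/-- Total variation distance between two distributions on `H`. -/
noncomputable def TV {H : Type*} [Fintype H] (p q : H → ℝ) : ℝ :=
  (1 / 2) * ∑ h : H, |p h - q h|

/-- `p` stochastically dominates `q` with respect to the strict preference relation
`pref` (where `pref x y` means `x` is strictly preferred to `y`): for every `h`, the
probability of an outcome at least as good as `h` under `p` is at least that under `q`. -/
def SDom {H : Type*} [Fintype H] (pref : H → H → Prop) (p q : H → ℝ) : Prop :=
  ∀ h : H,
    (∑ h' : H, Set.indicator {x : H | pref x h ∨ x = h} q h') ≤
      ∑ h' : H, Set.indicator {x : H | pref x h ∨ x = h} p h'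

/-- Preference-informed individual fairness with respect to a (pseudo)metric `d`,
total variation distance, and the doctors' strict preferences `pref`. -/
def PIIF {D H : Type*} [Fintype D] [Fintype H] [DecidableEq D] [DecidableEq H]
    (d : D → D → ℝ) (pref : D → H → H → Prop) (π : (D ≃ H) → ℝ) : Prop :=
  ∀ i j : D, ∃ p : H → ℝ,
    IsDist p ∧ TV p (prospect π j) ≤ d i j ∧ SDom (pref i) (prospect π i) p

/-- PIIF with respect to the proto-metric induced by the cluster map `c`: the prospect
of every doctor stochastically dominates the prospect of every doctor in its cluster. -/
def ClusterPIIF {D H K : Type*} [Fintype D] [Fintype H] [DecidableEq D] [DecidableEq H]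
    (c : D → K) (pref : D → H → H → Prop) (π : (D ≃ H) → ℝ) : Prop :=
  ∀ i j : D, c i = c j → SDom (pref i) (prospect π i) (prospect π j)

/-- A probability distribution `q` over strict linear orders on the doctors
(an order is represented by its rank function, a bijection `σ : D ≃ Fin n` where
`σ i < σ j` means `i` is ranked above `j`) is *strictly individually fair* with
respect to the cluster map `c` if (i) any two doctors in the same cluster have the
same rank distribution, and (ii) for any two distinct clusters, with probability 1
one of them is entirely ranked above the other. -/
def StrictIF {n : ℕ} {D K : Type*} [Fintype D] [DecidableEq D]
    (c : D → K) (q : (D ≃ Fin n) → ℝ) : Prop :=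
  (∀ i j : D, c i = c j → ∀ k : Fin n,
      (∑ σ : D ≃ Fin n, if σ i = k then q σ else 0) =
        (∑ σ : D ≃ Fin n, if σ j = k then q σ else 0)) ∧
  (∀ k1 k2 : K, k1 ≠ k2 →
      (∀ σ : D ≃ Fin n, q σ ≠ 0 → ∀ i j : D, c i = k1 → c j = k2 → σ i < σ j) ∨
      (∀ σ : D ≃ Fin n, q σ ≠ 0 → ∀ i j : D, c i = k1 → c j = k2 → σ j < σ i))

/-- A matching `m` is stable for the profile given by the doctors' strict preferences
`dpref` and the hospitals' strict orders `R` (rank functions over the doctors):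
no doctor–hospital pair prefer each other to their partners. -/
def StableFor {n : ℕ} {D H : Type*} (dpref : D → H → H → Prop)
    (R : H → D ≃ Fin n) (m : D ≃ H) : Prop :=
  ¬ ∃ (i : D) (h : H), dpref i h (m i) ∧ R h i < R h (m.symm h)

/-- `m` is the hospital-optimal stable matching for the given profile. -/
def HospitalOptimalStable {n : ℕ} {D H : Type*} (dpref : D → H → H → Prop)
    (R : H → D ≃ Fin n) (m : D ≃ H) : Prop :=
  StableFor dpref R m ∧
    ∀ m' : D ≃ H, StableFor dpref R m' →
      ∀ h : H, m.symm h = m'.symm h ∨ R h (m.symm h) < R h (m'.symm h)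

section Pushforward

theorem sum_ite_sum_fiberwise {Ω β M : Type*} [Fintype Ω] [Fintype β] [DecidableEq β]
    [AddCommMonoid M] (g : Ω → β) (p : β → Prop) [DecidablePred p] (w : Ω → M) :
    (∑ b, if p b then ∑ ω, (if g ω = b then w ω else 0) else 0) =
      ∑ ω, if p (g ω) then w ω else 0 := by
  rw [← sum_fiberwise univ g]
  refine sum_congr rfl fun b _ => ?_
  rw [sum_filter]
  split_ifs
  · exact sum_congr rfl fun ω _ => by split_ifs <;> simp_all
  · exact (sum_eq_zero fun ω _ => by split_ifs <;> simp_all).symm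

variable {Ω D H : Type*} [Fintype Ω] [Fintype D] [Fintype H] [DecidableEq D] [DecidableEq H]

theorem prospect_pushforward (f : Ω → D ≃ H) (w : Ω → ℝ) (i : D) (h : H) :
    prospect (fun m => ∑ ω, if f ω = m then w ω else 0) i h =
      ∑ ω, if f ω i = h then w ω else 0 :=
  sum_ite_sum_fiberwise f (· i = h) w

theorem sum_indicator_prospect_pushforward (f : Ω → D ≃ H) (w : Ω → ℝ) (i : D) (U : Set H)
    [DecidablePred (· ∈ U)] :
    ∑ h, U.indicator (prospect (fun m => ∑ ω, if f ω = m then w ω else 0) i) h =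
      ∑ ω, if f ω i ∈ U then w ω else 0 := by
  simp_rw [Set.indicator_apply, prospect_pushforward]
  exact sum_ite_sum_fiberwise (fun ω => f ω i) (· ∈ U) w

end Pushforward

theorem PMF.isDist_toReal {α : Type*} [Fintype α] (p : PMF α) : IsDist fun a => (p a).toReal := by
  refine ⟨fun a => ENNReal.toReal_nonneg, ?_⟩
  rw [← ENNReal.toReal_sum fun a _ => p.apply_ne_top a, ← tsum_fintype (L := .unconditional _),
    p.tsum_coe, ENNReal.toReal_one]

theorem PMF.mem_of_uniformOfFinset_toReal_ne_zero {α : Type*} {S : Finset α} {hS : S.Nonempty}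
    {a : α} (h : (uniformOfFinset S hS a).toReal ≠ 0) : a ∈ S :=
  (mem_support_uniformOfFinset_iff hS a).1 fun h0 => h (by rw [h0, ENNReal.toReal_zero])

section FairCoin

variable {ι α : Type*}

def coinFlip (a b : ι → α) (ε : ι → Bool) (i : ι) : α :=
  if ε i then b i else a i

theorem coinFlip_injective {a b : ι → α} (hab : ∀ i, a i ≠ b i) :
    Function.Injective (coinFlip a b) := by
  intro ε ε' h
  funext i
  have hi := congrFun h i
  cases hε : ε i <;> cases hε' : ε' i <;> simp only [coinFlip, hε, hε'] at hi ⊢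
  exacts [(hab i hi).elim, (hab i hi.symm).elim]

variable [DecidableEq α]

noncomputable def fairCoin (x y : α) : PMF α :=
  PMF.uniformOfFinset {x, y} (insert_nonempty x {y})

theorem fairCoin_toReal {x y : α} (hxy : x ≠ y) (z : α) :
    (fairCoin x y z).toReal = if z = x ∨ z = y then 2⁻¹ else 0 := by
  simp only [fairCoin, PMF.uniformOfFinset_apply, mem_insert, mem_singleton, card_pair hxy]
  split_ifs <;> simp

theorem exists_coinFlip_eq_of_prod_fairCoin_ne_zero [Fintype ι] {a b : ι → α} {R : ι → α}
    (hR : ∏ i, (fairCoin (a i) (b i) (R i)).toReal ≠ 0) : ∃ ε, coinFlip a b ε = R := by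
  have hmem i : R i = a i ∨ R i = b i := by
    simpa using PMF.mem_of_uniformOfFinset_toReal_ne_zero (prod_ne_zero_iff.1 hR i (mem_univ i))
  refine ⟨fun i => decide (R i = b i), funext fun i => ?_⟩
  rcases hmem i with h | h <;> by_cases hab : a i = b i <;> simp [coinFlip, h, hab]

theorem sum_ite_prod_fairCoin [Fintype ι] [DecidableEq ι] [Fintype α] {a b : ι → α}
    (hab : ∀ i, a i ≠ b i) (P : (ι → α) → Prop) [DecidablePred P] :
    (∑ R, if P R then ∏ i, (fairCoin (a i) (b i) (R i)).toReal else 0) =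
      #{ε | P (coinFlip a b ε)} / 2 ^ Fintype.card ι := by
  have hflip ε : ∏ i, (fairCoin (a i) (b i) (coinFlip a b ε i)).toReal = 2⁻¹ ^ Fintype.card ι := by
    rw [← card_univ, ← prod_const]
    refine prod_congr rfl fun i _ => ?_
    rw [fairCoin_toReal (hab i), if_pos]
    unfold coinFlip; split_ifs <;> simp
  rw [← Fintype.sum_of_injective (coinFlip a b) (coinFlip_injective hab) _ _ ?_ fun ε => rfl]
  · simp_rw [hflip]
    rw [sum_ite, sum_const_zero, add_zero, sum_const, nsmul_eq_mul, inv_pow, div_eq_mul_inv]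
  · rintro R hR
    have h0 : ∏ i, (fairCoin (a i) (b i) (R i)).toReal = 0 :=
      by_contra fun h => hR (exists_coinFlip_eq_of_prod_fairCoin_ne_zero h)
    simp [h0]

end FairCoin

section StrictIF

variable {n : ℕ} {D K : Type*} [Fintype D] [DecidableEq D]

theorem sum_rank_eq_of_swap_invariant (q : (D ≃ Fin n) → ℝ) {i j : D}
    (hq : ∀ σ, q ((Equiv.swap i j).trans σ) = q σ) (k : Fin n) :
    (∑ σ, if σ i = k then q σ else 0) = ∑ σ, if σ j = k then q σ else 0 := by
  have hinv : Function.Involutive fun σ : D ≃ Fin n => (Equiv.swap i j).trans σ :=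
    fun σ => by ext; simp
  rw [← Equiv.sum_comp (hinv.toPerm _)]
  simp [hq]

theorem strictIF_uniformOfFinset (c : D → K) (S : Finset (D ≃ Fin n)) (hS : S.Nonempty)
    (hswap : ∀ i j, c i = c j → ∀ σ ∈ S, (Equiv.swap i j).trans σ ∈ S)
    (hsep : ∀ k₁ k₂, k₁ ≠ k₂ →
      (∀ σ ∈ S, ∀ i j, c i = k₁ → c j = k₂ → σ i < σ j) ∨
      (∀ σ ∈ S, ∀ i j, c i = k₁ → c j = k₂ → σ j < σ i)) :
    StrictIF c fun σ => (PMF.uniformOfFinset S hS σ).toReal := by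
  refine ⟨fun i j hij k => sum_rank_eq_of_swap_invariant _ (fun σ => ?_) k, fun k₁ k₂ hk => ?_⟩
  · have hmem : (Equiv.swap i j).trans σ ∈ S ↔ σ ∈ S :=
      ⟨fun h => by simpa [← Equiv.trans_assoc] using hswap i j hij _ h, hswap i j hij σ⟩
    simp only [PMF.uniformOfFinset_apply, hmem]
    congr
  · exact (hsep k₁ k₂ hk).imp
      (fun H σ hσ => H σ (PMF.mem_of_uniformOfFinset_toReal_ne_zero hσ))
      (fun H σ hσ => H σ (PMF.mem_of_uniformOfFinset_toReal_ne_zero hσ))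

end StrictIF

def Fintype.equivOfBijective {α β : Type*} [Fintype α] [DecidableEq β] (f : α → β)
    (hf : Function.Bijective f := by decide) : α ≃ β :=
  ⟨f, Fintype.bijInv hf, Fintype.leftInverse_bijInv hf, Fintype.rightInverse_bijInv hf⟩

namespace HospitalProposingCounterexample

-- Preference lists, best first, of which the rank vectors below are the inverses.
-- Doctors: d0: h0 h3 h2 h1; d1: h3 h0 h1 h2; d2: h3 h2 h1 h0; d3: h1 h3 h0 h2.
-- Hospitals before the coin flip: h0, h3: d3 d0 d1 d2; h1: d0 d1 d3 d2; h2: d0 d1 d2 d3.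
def cluster : Fin 4 → Fin 3 := ![0, 0, 1, 2]

def doctorRank : Fin 4 → Fin 4 ≃ Fin 4 :=
  ![Fintype.equivOfBijective ![0, 3, 2, 1], Fintype.equivOfBijective ![1, 2, 3, 0],
    Fintype.equivOfBijective ![3, 2, 1, 0], Fintype.equivOfBijective ![2, 0, 3, 1]]

def baseRank : Fin 4 → Fin 4 ≃ Fin 4 :=
  ![Fintype.equivOfBijective ![1, 2, 3, 0], Fintype.equivOfBijective ![0, 1, 3, 2],
    Fintype.equivOfBijective ![0, 1, 2, 3], Fintype.equivOfBijective ![1, 2, 3, 0]]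

def flippedRank (h : Fin 4) : Fin 4 ≃ Fin 4 :=
  (Equiv.swap 0 1).trans (baseRank h)

noncomputable def hospitalPref (h : Fin 4) (σ : Fin 4 ≃ Fin 4) : ℝ :=
  (fairCoin (baseRank h) (flippedRank h) σ).toReal

-- On the support, the hospital-optimal stable matching only depends on whether hospitals 0
-- and 3 rank doctor 0 above doctor 1.
def matching (R : Fin 4 → Fin 4 ≃ Fin 4) : Fin 4 ≃ Fin 4 :=
  if R 0 = baseRank 0 then Equiv.refl _
  else if R 3 = baseRank 3 then Fintype.equivOfBijective ![3, 0, 2, 1]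
  else Fintype.equivOfBijective ![0, 3, 2, 1]

theorem baseRank_ne_flippedRank (h : Fin 4) : baseRank h ≠ flippedRank h := by
  revert h; decide

theorem strictIF_hospitalPref (h : Fin 4) : StrictIF cluster (hospitalPref h) :=
  strictIF_uniformOfFinset _ _ _ (by revert h; decide) (by revert h; decide)

theorem hospitalOptimalStable_matching (ε : Fin 4 → Bool) :
    HospitalOptimalStable (fun i h₁ h₂ => doctorRank i h₁ < doctorRank i h₂)
      (coinFlip baseRank flippedRank ε) (matching (coinFlip baseRank flippedRank ε)) := by
  revert ε
  unfold HospitalOptimalStable StableFor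
  decide

end HospitalProposingCounterexample

open HospitalProposingCounterexample

/-- Composing hospital-proposing Gale–Shapley with strictly
individually fair hospital preferences does not guarantee fairness: with
`|D| = |H| = 4` there exist a partition of the doctors into clusters, strict doctor
preferences (rank functions `drk`), independent probabilistic hospital preferences
`q h`, each strictly individually fair, and a map `f` sending every profile in the
support of the product distribution to the hospital-optimal stable matching of that
profile, such that the pushforward allocation of the product distribution under `f`
is not PIIF for the proto-metric. -/
theorem hospital_propose_gale_shapley_composition_fails :
    ∃ (c : Fin 4 → Fin 3) (drk : Fin 4 → Fin 4 ≃ Fin 4)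
      (q : Fin 4 → (Fin 4 ≃ Fin 4) → ℝ)
      (f : (Fin 4 → Fin 4 ≃ Fin 4) → Fin 4 ≃ Fin 4),
      (∀ h : Fin 4, IsDist (q h)) ∧
      (∀ h : Fin 4, StrictIF c (q h)) ∧
      (∀ R : Fin 4 → Fin 4 ≃ Fin 4, (∏ h : Fin 4, q h (R h)) ≠ 0 →
        HospitalOptimalStable (fun i h1 h2 => drk i h1 < drk i h2) R (f R)) ∧
      ¬ ClusterPIIF c (fun i h1 h2 => drk i h1 < drk i h2)
          (fun m : Fin 4 ≃ Fin 4 =>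
            ∑ R : Fin 4 → Fin 4 ≃ Fin 4,
              if f R = m then ∏ h : Fin 4, q h (R h) else 0) := by
  refine ⟨cluster, doctorRank, hospitalPref, matching, fun h => PMF.isDist_toReal _,
    strictIF_hospitalPref, fun R hR => ?_, fun hfair => ?_⟩
  · obtain ⟨ε, rfl⟩ := exists_coinFlip_eq_of_prod_fairCoin_ne_zero hR
    exact hospitalOptimalStable_matching ε
  · have hdom := hfair 1 0 rfl 0
    beta_reduce at hdom
    rw [sum_indicator_prospect_pushforward, sum_indicator_prospect_pushforward] at hdom
    simp only [hospitalPref] at hdom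
    rw [sum_ite_prod_fairCoin baseRank_ne_flippedRank,
      sum_ite_prod_fairCoin baseRank_ne_flippedRank] at hdom
    have h₀ : #{ε | matching (coinFlip baseRank flippedRank ε) 0 ∈
        {x | doctorRank 1 x < doctorRank 1 0 ∨ x = 0}} = 16 := by decide
    have h₁ : #{ε | matching (coinFlip baseRank flippedRank ε) 1 ∈
        {x | doctorRank 1 x < doctorRank 1 0 ∨ x = 0}} = 8 := by decide
    rw [h₀, h₁] at hdom
    norm_num at hdom
end

section
/- No deterministic allocation is fair when two similar doctors share the same preferences: let D be partitioned into clusters (proto-metric) and suppose i ≠ j are two doctors in the same cluster with identical strict preference orders, ≻_i = ≻_j. Then for every matching m : D → H, the point-mass allocation δ_m is not PIIF with respect to the proto-metric. -/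
/-!
Under the point mass `δ_m` every prospect is a point mass, so `i`'s prospect dominates `j`'s
exactly when `m i ⪰_i m j`. Applying this in both directions with `≻_i = ≻_j` and
`m i ≠ m j` contradicts asymmetry of the strict order.
-/

open Finset

section PointMass

variable {D H : Type*} [Fintype D] [Fintype H] [DecidableEq D] [DecidableEq H]

theorem prospect_pointMass (m : D ≃ H) (a : D) :
    prospect (fun m' : D ≃ H => if m' = m then (1 : ℝ) else 0) a = Pi.single (m a) 1 := by
  ext h
  rw [prospect, Finset.sum_eq_single m (fun m' _ hm' => by simp [hm']) (by simp)]
  simp [Pi.single_apply, eq_comm]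

theorem sum_indicator_prospect_pointMass (m : D ≃ H) (a : D) (S : Set H) :
    ∑ h, S.indicator (prospect (fun m' : D ≃ H => if m' = m then (1 : ℝ) else 0) a) h =
      S.indicator 1 (m a) := by
  rw [prospect_pointMass, Finset.sum_eq_single (m a) (fun h _ hne => by simp [hne]) (by simp)]
  by_cases hS : m a ∈ S <;> simp [hS]

theorem SDom.pref_or_eq_of_pointMass {pref : H → H → Prop} {m : D ≃ H} {a b : D}
    (hdom : SDom pref (prospect (fun m' : D ≃ H => if m' = m then (1 : ℝ) else 0) a)
      (prospect (fun m' : D ≃ H => if m' = m then (1 : ℝ) else 0) b)) :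
    pref (m a) (m b) ∨ m a = m b := by
  have := hdom (m b)
  simp only [sum_indicator_prospect_pointMass] at this
  by_contra hne
  have hmem : m b ∈ {x | pref x (m b) ∨ x = m b} := Or.inr rfl
  rw [Set.indicator_of_mem hmem, Set.indicator_of_notMem (show m a ∉ _ from hne)] at this
  norm_num at this

end PointMass

/-- No deterministic allocation is fair when two similar doctors share
the same preferences: if `i ≠ j` are two doctors in the same cluster of the proto-metric
with identical strict preference orders, then for every matching `m` the point-mass
allocation `δ_m` is not PIIF with respect to the proto-metric. -/
theorem deterministic_allocation_unfair
    {D H K : Type*} [Fintype D] [Fintype H] [DecidableEq D] [DecidableEq H]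
    (c : D → K)
    (dpref : D → H → H → Prop) (hdpref : ∀ a, IsStrictTotalOrder H (dpref a))
    (i j : D) (hij : i ≠ j) (hcluster : c i = c j) (hsame : dpref i = dpref j)
    (m : D ≃ H) :
    ¬ ClusterPIIF c dpref (fun m' : D ≃ H => if m' = m then (1 : ℝ) else 0) := by
  intro hfair
  have hne : m i ≠ m j := m.injective.ne hij
  have hij_pref := (hfair i j hcluster).pref_or_eq_of_pointMass.resolve_right hne
  have hji_pref := (hfair j i hcluster.symm).pref_or_eq_of_pointMass.resolve_right hne.symm
  rw [← hsame] at hji_pref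
  have := hdpref i
  exact asymm hij_pref hji_pref
end
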